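/- Let Σ be a real symmetric positive definite 2n×2n matrix with blocks Σ = [[Σ_XX, Σ_XP],[Σ_PX, Σ_PP]] (Σ_PX = Σ_XPᵀ) satisfying Σ_XX Σ_XP = Σ_PX Σ_XX, Σ_PX Σ_PP = Σ_PP Σ_XP, and Σ_XX Σ_PP − (Σ_XP)² = (ħ²/4) I. Then all (complex) eigenvalues of the matrix (Σ_XP)² are real and nonnegative, and consequently every eigenvalue of Σ_XX Σ_PP is real and ≥ ħ²/4. -/

import Mathlib

open Matrix ComplexOrder MeasureTheory

noncomputable section

/-- Phase space ℝ^{2n} ≃ ℝⁿ × ℝⁿ, with coordinates z = (x,p). -/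
abbrev PS (n : ℕ) := Fin n ⊕ Fin n → ℝ

/-- The standard symplectic matrix J = [[0, I], [-I, 0]]. -/
def Jmat (n : ℕ) : Matrix (Fin n ⊕ Fin n) (Fin n ⊕ Fin n) ℝ :=
  Matrix.fromBlocks 0 1 (-1) 0

/-- The standard symplectic form ω(z,z′) = (Jz)·z′. -/
def symp (n : ℕ) (z z' : PS n) : ℝ := (Jmat n).mulVec z ⬝ᵥ z'

/-- The symplectic group Sp(n) = {S : SᵀJS = J}. -/
def Sp (n : ℕ) : Set (Matrix (Fin n ⊕ Fin n) (Fin n ⊕ Fin n) ℝ) :=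
  {S | Sᵀ * Jmat n * S = Jmat n}

/-
Since `Σ_XX` is positive definite, `h1` says that `Σ_XP` is self-adjoint for the inner product
`⟪u, v⟫ = uᴴ Σ_XX v`. Hence if `Σ_XP² v = μ v` with `v ≠ 0`, then
`μ ⟪v, v⟫ = ⟪v, Σ_XP² v⟫ = ⟪Σ_XP v, Σ_XP v⟫ ≥ 0`, so `μ` is real and nonnegative. The second claim
follows because `h3` writes `Σ_XX Σ_PP` as `(ℏ²/4) I + Σ_XP²`, whose spectrum is that of `Σ_XP²`
shifted by `ℏ²/4`.
-/

open scoped MatrixOrder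

namespace Matrix

theorem PosDef.toBlocks₁₁ {m n R : Type*} [Ring R] [PartialOrder R] [StarRing R]
    {M : Matrix (m ⊕ n) (m ⊕ n) R} (hM : M.PosDef) : M.toBlocks₁₁.PosDef :=
  hM.submatrix Sum.inl_injective

theorem exists_mulVec_eq_smul_of_mem_spectrum {m K : Type*} [Fintype m] [DecidableEq m] [Field K]
    {A : Matrix m m K} {μ : K} (hμ : μ ∈ spectrum K A) : ∃ v ≠ 0, A *ᵥ v = μ • v := by
  rw [← spectrum_toLin', ← Module.End.hasEigenvalue_iff_mem_spectrum] at hμ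
  obtain ⟨v, hv⟩ := hμ.exists_hasEigenvector
  exact ⟨v, hv.2, hv.apply_eq_smul⟩

variable {m 𝕜 : Type*} [Fintype m] [DecidableEq m] [RCLike 𝕜]

theorem PosDef.map_ofReal {S : Matrix m m ℝ} (hS : S.PosDef) :
    (S.map (algebraMap ℝ 𝕜)).PosDef := by
  set A := CFC.sqrt S
  have hA : IsUnit (A.map (algebraMap ℝ 𝕜)) :=
    (CFC.isUnit_sqrt_iff_isStrictlyPositive.2 (isStrictlyPositive_iff_posDef.2 hS)).map
      (algebraMap ℝ 𝕜).mapMatrix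
  have hSA : S.map (algebraMap ℝ 𝕜) = (A.map (algebraMap ℝ 𝕜))ᴴ * A.map (algebraMap ℝ 𝕜) := by
    have hAH : Aᴴ = A := (CFC.sqrt_nonneg S).posSemidef.isHermitian.eq
    have hAA : A * A = S := CFC.sqrt_mul_sqrt_self S hS.posSemidef.nonneg
    rw [← conjTranspose_map _ fun x => (RCLike.conj_ofReal x).symm, ← Matrix.map_mul, hAH, hAA]
  rw [hSA]
  exact PosDef.conjTranspose_mul_self _ (mulVec_injective_of_isUnit hA)

theorem nonneg_of_mem_spectrum_mul_self {S X : Matrix m m 𝕜} (hS : S.PosDef)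
    (hSX : S * X = Xᴴ * S) {μ : 𝕜} (hμ : μ ∈ spectrum 𝕜 (X * X)) : 0 ≤ μ := by
  obtain ⟨v, hv0, hv⟩ := exists_mulVec_eq_smul_of_mem_spectrum hμ
  have hquad : star (X *ᵥ v) ⬝ᵥ S *ᵥ (X *ᵥ v) = μ * (star v ⬝ᵥ S *ᵥ v) :=
    calc star (X *ᵥ v) ⬝ᵥ S *ᵥ (X *ᵥ v) = star v ⬝ᵥ (Xᴴ * S) *ᵥ (X *ᵥ v) := by
          rw [star_mulVec, ← dotProduct_mulVec, mulVec_mulVec]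
      _ = star v ⬝ᵥ S *ᵥ ((X * X) *ᵥ v) := by
          rw [← hSX, ← mulVec_mulVec, ← mulVec_mulVec, mulVec_mulVec v X X]
      _ = μ * (star v ⬝ᵥ S *ᵥ v) := by
          rw [hv, mulVec_smul, dotProduct_smul, smul_eq_mul]
  have hpos := hS.dotProduct_mulVec_pos hv0
  have hnonneg := hquad ▸ hS.posSemidef.dotProduct_mulVec_nonneg (X *ᵥ v)
  simpa only [mul_inv_cancel_right₀ hpos.ne'] using
    mul_nonneg hnonneg (RCLike.inv_pos_of_pos hpos).le

end Matrix

theorem eigenvalues_sq_offdiag_nonneg (n : ℕ) (ℏ : ℝ)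
    (Sxx Sxp Spx Spp : Matrix (Fin n) (Fin n) ℝ)
    (hSig : (Matrix.fromBlocks Sxx Sxp Spx Spp).PosDef)
    (hSpx : Spx = Sxpᵀ)
    (h1 : Sxx * Sxp = Spx * Sxx)
    (h3 : Sxx * Spp - Sxp * Sxp = (ℏ ^ 2 / 4) • (1 : Matrix (Fin n) (Fin n) ℝ)) :
    (∀ μ ∈ spectrum ℂ ((Sxp * Sxp).map (Complex.ofReal)), μ.im = 0 ∧ 0 ≤ μ.re) ∧
    (∀ μ ∈ spectrum ℂ ((Sxx * Spp).map (Complex.ofReal)), μ.im = 0 ∧ ℏ ^ 2 / 4 ≤ μ.re) := by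
  rw [← Complex.coe_algebraMap]
  set φ := algebraMap ℝ ℂ
  have hSxx : (Sxx.map φ).PosDef := by simpa using hSig.toBlocks₁₁.map_ofReal
  have hSX : Sxx.map φ * Sxp.map φ = (Sxp.map φ)ᴴ * Sxx.map φ := by
    rw [← conjTranspose_map _ fun x => (RCLike.conj_ofReal x).symm, ← Matrix.map_mul,
      ← Matrix.map_mul, conjTranspose_eq_transpose_of_trivial, ← hSpx, h1]
  have hXX : ∀ μ ∈ spectrum ℂ ((Sxp * Sxp).map φ), 0 ≤ μ := fun μ hμ =>
    nonneg_of_mem_spectrum_mul_self hSxx hSX (by rwa [Matrix.map_mul] at hμ)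
  have hshift : (Sxx * Spp).map φ = algebraMap ℂ _ (φ (ℏ ^ 2 / 4)) + (Sxp * Sxp).map φ := by
    rw [eq_add_of_sub_eq h3, Algebra.algebraMap_eq_smul_one]
    ext i j
    simp [one_apply, apply_ite φ, mul_apply]
  refine ⟨fun μ hμ => ?_, fun μ hμ => ?_⟩
  · obtain ⟨hre, him⟩ := Complex.le_def.1 (hXX μ hμ)
    exact ⟨him.symm, hre⟩
  · rw [hshift, ← sub_add_cancel μ (φ (ℏ ^ 2 / 4)), spectrum.add_mem_add_iff] at hμ
    obtain ⟨hre, him⟩ := Complex.le_def.1 (sub_nonneg.1 (hXX _ hμ))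
    exact ⟨him.symm, hre⟩
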